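/- Fix a signal intensity μ_s > 0 and let 0 < μ₁ < μ₂ < μ_s < μ₃ < μ₄. Assume â(μ_s,μ₄) > 0 and b̂(μ_s)/â(μ_s,μ₄) < 1/2. Then the conventional asymptotic key generation rate R̃ satisfies the chain R̃(μ_s,μ₁) ≥ R̃(μ_s,μ₂) ≥ R̃(μ_s,μ₃) ≥ R̃(μ_s,μ₄); i.e., for fixed μ_s the rate R̃(μ_s,μ_d) is monotonically decreasing in the decoy intensity μ_d. -/

import Mathlib

/-- Binary entropy function (base-2). Note `Real.logb 2 0 = 0`, so `binEnt 0 = binEnt 1 = 0`. -/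
noncomputable def binEnt (x : ℝ) : ℝ :=
  -x * Real.logb 2 x - (1 - x) * Real.logb 2 (1 - x)

/-- Estimate `b̂(μ)` of the phase-error detection rate of the single photon pulse. -/
noncomputable def bHat (α s p₀ μ : ℝ) : ℝ :=
  (s * (1 - Real.exp (-α * μ)) * Real.exp μ + (p₀ / 2) * (Real.exp μ - 1)) / μ

/-- Estimate `â(μ₁,μ₂)` of the detection rate of the single photon pulse. -/
noncomputable def aHat (α p₀ μ₁ μ₂ : ℝ) : ℝ :=
  (μ₂ ^ 2 * Real.exp μ₁ * ((1 - Real.exp (-α * μ₁)) + p₀ * (1 - Real.exp (-μ₁)))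
    - μ₁ ^ 2 * Real.exp μ₂ * ((1 - Real.exp (-α * μ₂)) + p₀ * (1 - Real.exp (-μ₂))))
  / (μ₁ * μ₂ * (μ₂ - μ₁))

/-- Detection rate `p₊(μ)` of a pulse of intensity `μ`. -/
noncomputable def pPlus (α p₀ μ : ℝ) : ℝ := 1 - Real.exp (-α * μ) + p₀

/-- Error rate `e₊(μ)` of a pulse of intensity `μ`. -/
noncomputable def ePlus (α s p₀ μ : ℝ) : ℝ :=
  (s * (1 - Real.exp (-α * μ)) + p₀ / 2) / pPlus α p₀ μ

/-- The conventional asymptotic key generation rate `R̃(μ_s, μ_d)`. -/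
noncomputable def Rtilde (α s p₀ η μs μd : ℝ) : ℝ :=
  if μd < μs then
    μs * Real.exp (-μs) * aHat α p₀ μd μs *
        (1 - binEnt (bHat α s p₀ μd / aHat α p₀ μd μs))
      + Real.exp (-μs) * p₀ - pPlus α p₀ μs * η * binEnt (ePlus α s p₀ μs)
  else
    μs * Real.exp (-μs) * aHat α p₀ μs μd *
        (1 - binEnt (bHat α s p₀ μs / aHat α p₀ μs μd))
      + Real.exp (-μs) * p₀ - pPlus α p₀ μs * η * binEnt (ePlus α s p₀ μs)

/-!
`â(μ_s, μ_d)` is the secant slope, between `1/μ_s` and `1/μ_d`, of a function that is convex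
on `(0, ∞)` (its second derivative is a combination of values of the increasing function
`u ↦ e^u (u² - 2u + 2)`), so `â` decreases as `μ_d` grows. Likewise `b̂(μ)` is the secant slope
from `0` of a convex function, so it increases with `μ`. Finally `a (1 - h(b/a))` increases in
`a` while `b/a ≤ 1/2` and decreases in `b`, and the hypotheses at `μ₄` propagate to every smaller
decoy intensity.
-/

open Real Set

lemma monotone_exp_mul_quadratic : Monotone fun u : ℝ => exp u * (u ^ 2 - 2 * u + 2) := by
  have hd : ∀ u : ℝ, HasDerivAt (fun u : ℝ => exp u * (u ^ 2 - 2 * u + 2)) (exp u * u ^ 2) u :=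
    fun u => ((hasDerivAt_exp u).mul (((hasDerivAt_pow 2 u).sub
      ((hasDerivAt_id u).const_mul 2)).add_const 2)).congr_deriv
        (by simp only [Pi.sub_apply, id]; ring)
  exact monotone_of_deriv_nonneg (fun u => (hd u).differentiableAt)
    fun u => (hd u).deriv ▸ by positivity

lemma hasDerivAt_sq_mul_exp_div {c x : ℝ} (hx : x ≠ 0) :
    HasDerivAt (fun y => y ^ 2 * exp (c / y)) (exp (c / x) * (2 * x - c)) x := by
  have h := (hasDerivAt_pow 2 x).mul ((hasDerivAt_const x c).div (hasDerivAt_id x) hx).exp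
  refine h.congr_deriv ?_
  simp only [Pi.div_apply, id]
  field_simp
  ring

lemma hasDerivAt_exp_div_mul {c x : ℝ} (hx : x ≠ 0) :
    HasDerivAt (fun y => exp (c / y) * (2 * y - c))
      (exp (c / x) * ((c / x) ^ 2 - 2 * (c / x) + 2)) x := by
  have h := ((hasDerivAt_const x c).div (hasDerivAt_id x) hx).exp.mul
    (((hasDerivAt_id x).const_mul 2).sub_const c)
  refine h.congr_deriv ?_
  simp only [Pi.div_apply, id]
  field_simp
  ring

lemma convexOn_sq_mul_exp_div_sub {c d : ℝ} (hcd : c ≤ d) :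
    ConvexOn ℝ (Ioi 0) fun x => x ^ 2 * exp (d / x) - x ^ 2 * exp (c / x) := by
  refine convexOn_of_hasDerivWithinAt2_nonneg (convex_Ioi 0)
    (f' := fun x => exp (d / x) * (2 * x - d) - exp (c / x) * (2 * x - c))
    (f'' := fun x => exp (d / x) * ((d / x) ^ 2 - 2 * (d / x) + 2)
      - exp (c / x) * ((c / x) ^ 2 - 2 * (c / x) + 2)) ?_ ?_ ?_ ?_
  · exact fun x hx => ((hasDerivAt_sq_mul_exp_div (ne_of_gt hx)).sub
      (hasDerivAt_sq_mul_exp_div (ne_of_gt hx))).continuousAt.continuousWithinAt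
  all_goals rw [interior_Ioi]; intro x hx
  · exact ((hasDerivAt_sq_mul_exp_div (ne_of_gt hx)).sub
      (hasDerivAt_sq_mul_exp_div (ne_of_gt hx))).hasDerivWithinAt
  · exact ((hasDerivAt_exp_div_mul (ne_of_gt hx)).sub
      (hasDerivAt_exp_div_mul (ne_of_gt hx))).hasDerivWithinAt
  · exact sub_nonneg.2 (monotone_exp_mul_quadratic (div_le_div_of_nonneg_right hcd (le_of_lt hx)))

/-- With `g(μ) = e^μ ((1 - e^{-αμ}) + p₀ (1 - e^{-μ}))`, this is `x² g(1/x)`; `aHat μ₁ μ₂` is its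
slope between `1/μ₁` and `1/μ₂`. -/
noncomputable def aHatPotential (α p₀ x : ℝ) : ℝ :=
  x ^ 2 * ((1 + p₀) * exp (1 / x) - exp ((1 - α) / x) - p₀)

lemma convexOn_aHatPotential {α p₀ : ℝ} (hα : 0 ≤ α) (hp : 0 ≤ p₀) :
    ConvexOn ℝ (Ioi 0) (aHatPotential α p₀) := by
  refine ((convexOn_sq_mul_exp_div_sub (by linarith : 1 - α ≤ 1)).add
    ((convexOn_sq_mul_exp_div_sub zero_le_one).smul hp)).congr fun x _ => ?_
  simp only [aHatPotential, Pi.add_apply, smul_eq_mul, zero_div, exp_zero]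
  ring

lemma aHat_comm (α p₀ μ₁ μ₂ : ℝ) : aHat α p₀ μ₁ μ₂ = aHat α p₀ μ₂ μ₁ := by
  rw [aHat, aHat, ← neg_div_neg_eq]
  ring_nf

lemma aHat_eq_slope {α p₀ μ₁ μ₂ : ℝ} (h₁ : 0 < μ₁) (h₂ : 0 < μ₂) (hne : μ₁ ≠ μ₂) :
    aHat α p₀ μ₁ μ₂ = slope (aHatPotential α p₀) μ₁⁻¹ μ₂⁻¹ := by
  have hexp : ∀ μ, exp (-α * μ) = exp ((1 - α) * μ) / exp μ := fun μ => by
    rw [← exp_sub]; ring_nf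
  rw [aHat, slope_def_field, aHatPotential, aHatPotential, one_div, one_div, inv_inv, inv_inv,
    div_inv_eq_mul, div_inv_eq_mul, hexp, hexp, exp_neg, exp_neg]
  field_simp
  ring

lemma aHat_antitoneOn {α p₀ μ : ℝ} (hα : 0 ≤ α) (hp : 0 ≤ p₀) (hμ : 0 < μ) :
    AntitoneOn (aHat α p₀ μ) (Ioi 0 \ {μ}) := by
  rintro ν ⟨hν, hνμ⟩ ν' ⟨hν', hν'μ⟩ hle
  rw [aHat_eq_slope hμ hν (Ne.symm hνμ), aHat_eq_slope hμ hν' (Ne.symm hν'μ)]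
  exact (convexOn_aHatPotential hα hp).slope_mono (inv_pos.2 hμ)
    ⟨mem_Ioi.2 (inv_pos.2 hν'), inv_injective.ne hν'μ⟩
    ⟨mem_Ioi.2 (inv_pos.2 hν), inv_injective.ne hνμ⟩
    (inv_anti₀ (mem_Ioi.1 hν) hle)

lemma convexOn_exp_sub_exp_mul {c : ℝ} (hc : |c| ≤ 1) :
    ConvexOn ℝ (Ici 0) fun μ => exp μ - exp (c * μ) := by
  have hexp : ∀ μ : ℝ, HasDerivAt (fun μ => exp (c * μ)) (exp (c * μ) * c) μ := fun μ =>
    ((hasDerivAt_id μ).const_mul c).exp.congr_deriv (by simp)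
  refine convexOn_of_hasDerivWithinAt2_nonneg (convex_Ici 0)
    (f' := fun μ => exp μ - exp (c * μ) * c) (f'' := fun μ => exp μ - exp (c * μ) * c * c)
    (fun μ _ => ((hasDerivAt_exp μ).sub (hexp μ)).continuousAt.continuousWithinAt)
    (fun μ _ => ((hasDerivAt_exp μ).sub (hexp μ)).hasDerivWithinAt)
    (fun μ _ => ((hasDerivAt_exp μ).sub ((hexp μ).mul_const c)).hasDerivWithinAt) ?_
  rw [interior_Ici]
  intro μ hμ
  have hcμ : exp (c * μ) ≤ exp μ :=
    exp_le_exp.2 (mul_le_of_le_one_left (le_of_lt hμ) ((le_abs_self c).trans hc))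
  have hc2 : c * c ≤ 1 := by nlinarith [abs_mul_abs_self c, abs_nonneg c]
  nlinarith [exp_pos (c * μ)]

/-- `bHat μ` is the slope of this function between `0` and `μ`. -/
noncomputable def bHatPotential (α s p₀ μ : ℝ) : ℝ :=
  s * (exp μ - exp ((1 - α) * μ)) + p₀ / 2 * (exp μ - 1)

lemma convexOn_bHatPotential {α s p₀ : ℝ} (hα : 0 ≤ α) (hα1 : α ≤ 1) (hs : 0 ≤ s)
    (hp : 0 ≤ p₀) : ConvexOn ℝ (Ici 0) (bHatPotential α s p₀) := by
  have hc : |1 - α| ≤ 1 := abs_le.2 ⟨by linarith, by linarith⟩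
  refine (((convexOn_exp_sub_exp_mul hc).smul hs).add
    (((convexOn_exp.subset (subset_univ _) (convex_Ici 0)).add_const (-1)).smul
      (by positivity : 0 ≤ p₀ / 2))).congr fun μ _ => ?_
  simp only [bHatPotential, Pi.add_apply, smul_eq_mul]
  ring

lemma bHat_eq_slope (α s p₀ μ : ℝ) : bHat α s p₀ μ = slope (bHatPotential α s p₀) 0 μ := by
  rw [bHat, slope_def_field, bHatPotential, bHatPotential, mul_zero, exp_zero, sub_self,
    mul_zero, mul_zero, add_zero, sub_zero, sub_zero, sub_mul, one_mul, exp_sub, neg_mul,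
    exp_neg]
  ring

lemma bHat_monotoneOn {α s p₀ : ℝ} (hα : 0 ≤ α) (hα1 : α ≤ 1) (hs : 0 ≤ s) (hp : 0 ≤ p₀) :
    MonotoneOn (bHat α s p₀) (Ioi 0) := by
  intro μ hμ ν hν hle
  rw [bHat_eq_slope, bHat_eq_slope]
  exact (convexOn_bHatPotential hα hα1 hs hp).slope_mono self_mem_Ici
    ⟨mem_Ici.2 (le_of_lt hμ), ne_of_gt hμ⟩ ⟨mem_Ici.2 (le_of_lt hν), ne_of_gt hν⟩ hle

lemma bHat_pos {α s p₀ μ : ℝ} (hα : 0 ≤ α) (hs : 0 ≤ s) (hp : 0 < p₀) (hμ : 0 < μ) :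
    0 < bHat α s p₀ μ := by
  have hsignal : 0 ≤ s * (1 - exp (-α * μ)) * exp μ :=
    mul_nonneg (mul_nonneg hs (sub_nonneg.2 (exp_le_one_iff.2 (by nlinarith)))) (exp_pos μ).le
  have hdark : 0 < p₀ / 2 * (exp μ - 1) := mul_pos (by positivity) (sub_pos.2 (one_lt_exp_iff.2 hμ))
  exact div_pos (by linarith) hμ

lemma binEnt_eq_binEntropy_div (x : ℝ) : binEnt x = binEntropy x / log 2 := by
  rw [binEnt, binEntropy, logb, logb, log_inv, log_inv]
  ring

lemma binEnt_monotoneOn : MonotoneOn binEnt (Icc 0 2⁻¹) := fun x hx y hy hxy => by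
  rw [binEnt_eq_binEntropy_div, binEnt_eq_binEntropy_div]
  exact div_le_div_of_nonneg_right (binEntropy_strictMonoOn.monotoneOn hx hy hxy)
    (log_pos one_lt_two).le

noncomputable def keyYield (a b : ℝ) : ℝ := a * (1 - binEnt (b / a))

lemma keyYield_eq {a b : ℝ} (hb : 0 < b) (hba : b < a) :
    keyYield a b = a - (a * log a - b * log b - (a - b) * log (a - b)) / log 2 := by
  have ha : 0 < a := hb.trans hba
  have hab : 0 < a - b := sub_pos.2 hba
  rw [keyYield, binEnt, logb, logb, show 1 - b / a = (a - b) / a by field_simp,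
    log_div hb.ne' ha.ne', log_div hab.ne' ha.ne']
  field_simp
  ring

lemma hasDerivAt_keyYield_left {a b : ℝ} (hb : 0 < b) (hba : b < a) :
    HasDerivAt (fun x => keyYield x b) (1 - log (a / (a - b)) / log 2) a := by
  have hab : 0 < a - b := sub_pos.2 hba
  have hshift : HasDerivAt (fun x => (x - b) * log (x - b)) (log (a - b) + 1) a := by
    simpa [Function.comp_def] using
      (hasDerivAt_mul_log hab.ne').comp a ((hasDerivAt_id a).sub_const b)
  have h := (hasDerivAt_id a).sub
    ((((hasDerivAt_mul_log (hb.trans hba).ne').sub_const (b * log b)).sub hshift).div_const (log 2))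
  refine (h.congr_deriv ?_).congr_of_eventuallyEq ?_
  · rw [log_div (hb.trans hba).ne' hab.ne']
    ring
  · filter_upwards [Ioi_mem_nhds hba] with x hx
    exact keyYield_eq hb hx

lemma keyYield_monotoneOn_left {b : ℝ} (hb : 0 < b) :
    MonotoneOn (fun a => keyYield a b) (Ici (2 * b)) := by
  have hlt : ∀ a ∈ Ici (2 * b), b < a := fun a ha => by linarith [mem_Ici.1 ha]
  refine monotoneOn_of_hasDerivWithinAt_nonneg (convex_Ici _)
    (fun a ha => (hasDerivAt_keyYield_left hb (hlt a ha)).continuousAt.continuousWithinAt)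
    (fun a ha => (hasDerivAt_keyYield_left hb
      (hlt a (interior_subset ha))).hasDerivWithinAt) fun a ha => ?_
  rw [interior_Ici] at ha
  have hab : 0 < a - b := by linarith [mem_Ioi.1 ha]
  have hlog : log (a / (a - b)) ≤ log 2 :=
    log_le_log (div_pos (by linarith) hab) ((div_le_iff₀ hab).2 (by linarith [mem_Ioi.1 ha]))
  linarith [div_le_one_of_le₀ hlog (log_pos one_lt_two).le]

lemma keyYield_le_keyYield {a a' b b' : ℝ} (hb : 0 < b) (hbb : b ≤ b') (haa : a' ≤ a)
    (ha' : 0 < a') (hr : b' / a' ≤ 1 / 2) : keyYield a' b' ≤ keyYield a b := by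
  have ha : 0 < a := ha'.trans_le haa
  have h2b : 2 * b' ≤ a' := by linarith [(div_le_iff₀ ha').1 hr]
  calc keyYield a' b' ≤ keyYield a b' :=
        keyYield_monotoneOn_left (hb.trans_le hbb) h2b (h2b.trans haa) haa
    _ ≤ keyYield a b := by
        have hr' : b' / a ≤ 2⁻¹ := (div_le_iff₀ ha).2 (by linarith)
        refine mul_le_mul_of_nonneg_left (sub_le_sub_left ?_ 1) ha.le
        have hbb' : b / a ≤ b' / a := div_le_div_of_nonneg_right hbb ha.le
        have hb0 : 0 ≤ b / a := div_nonneg hb.le ha.le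
        exact binEnt_monotoneOn ⟨hb0, hbb'.trans hr'⟩ ⟨hb0.trans hbb', hr'⟩ hbb'

lemma Rtilde_eq (α s p₀ η μs μd : ℝ) : Rtilde α s p₀ η μs μd =
    μs * exp (-μs) * keyYield (aHat α p₀ μs μd) (bHat α s p₀ (min μd μs))
      + (exp (-μs) * p₀ - pPlus α p₀ μs * η * binEnt (ePlus α s p₀ μs)) := by
  rw [Rtilde, keyYield]
  split_ifs with h
  · rw [min_eq_left h.le, aHat_comm]
    ring
  · rw [min_eq_right (not_lt.1 h)]
    ring

lemma aHat_le_aHat_and_bHat_min_le_of_le {α s p₀ μs μd μd' : ℝ} (hα : 0 ≤ α) (hα1 : α ≤ 1)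
    (hs : 0 ≤ s) (hp : 0 ≤ p₀) (hμs : 0 < μs) (hμd : 0 < μd) (hle : μd ≤ μd') (hne : μd ≠ μs)
    (hne' : μd' ≠ μs) :
    aHat α p₀ μs μd' ≤ aHat α p₀ μs μd ∧ bHat α s p₀ (min μd μs) ≤ bHat α s p₀ (min μd' μs) :=
  ⟨aHat_antitoneOn hα hp hμs ⟨hμd, hne⟩ ⟨hμd.trans_le hle, hne'⟩ hle,
    bHat_monotoneOn hα hα1 hs hp (lt_min hμd hμs) (lt_min (hμd.trans_le hle) hμs)
      (min_le_min_right μs hle)⟩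

lemma aHat_pos_and_ratio_le_of_le {α s p₀ μs μd μd' : ℝ} (hα : 0 ≤ α) (hα1 : α ≤ 1)
    (hs : 0 ≤ s) (hp : 0 < p₀) (hμs : 0 < μs) (hμd : 0 < μd) (hle : μd ≤ μd') (hne : μd ≠ μs)
    (hne' : μd' ≠ μs) (ha : 0 < aHat α p₀ μs μd')
    (hr : bHat α s p₀ (min μd' μs) / aHat α p₀ μs μd' ≤ 1 / 2) :
    0 < aHat α p₀ μs μd ∧ bHat α s p₀ (min μd μs) / aHat α p₀ μs μd ≤ 1 / 2 := by
  obtain ⟨haa, hbb⟩ := aHat_le_aHat_and_bHat_min_le_of_le (s := s) hα hα1 hs hp.le hμs hμd hle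
    hne hne'
  exact ⟨ha.trans_le haa,
    (div_le_div₀ (bHat_pos hα hs hp (lt_min (hμd.trans_le hle) hμs)).le hbb ha haa).trans hr⟩

lemma Rtilde_le_Rtilde_of_le {α s p₀ η μs μd μd' : ℝ} (hα : 0 ≤ α) (hα1 : α ≤ 1)
    (hs : 0 ≤ s) (hp : 0 < p₀) (hμs : 0 < μs) (hμd : 0 < μd) (hle : μd ≤ μd') (hne : μd ≠ μs)
    (hne' : μd' ≠ μs) (ha : 0 < aHat α p₀ μs μd')
    (hr : bHat α s p₀ (min μd' μs) / aHat α p₀ μs μd' ≤ 1 / 2) :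
    Rtilde α s p₀ η μs μd' ≤ Rtilde α s p₀ η μs μd := by
  obtain ⟨haa, hbb⟩ := aHat_le_aHat_and_bHat_min_le_of_le (s := s) hα hα1 hs hp.le hμs hμd hle
    hne hne'
  rw [Rtilde_eq, Rtilde_eq]
  gcongr
  exact keyYield_le_keyYield (bHat_pos hα hs hp (lt_min hμd hμs)) hbb haa ha hr

theorem stmt3_general (α s p₀ η μs μ₁ μ₂ μ₃ μ₄ : ℝ)
    (hα : 0 < α) (hα1 : α ≤ 1) (hs0 : 0 ≤ s) (hp : 0 < p₀)
    (hμ₁ : 0 < μ₁) (h₁₂ : μ₁ < μ₂) (h₂s : μ₂ < μs) (hs₃ : μs < μ₃) (h₃₄ : μ₃ < μ₄)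
    (hpos : 0 < aHat α p₀ μs μ₄)
    (hratio : bHat α s p₀ μs / aHat α p₀ μs μ₄ < 1 / 2) :
    Rtilde α s p₀ η μs μ₂ ≤ Rtilde α s p₀ η μs μ₁ ∧
    Rtilde α s p₀ η μs μ₃ ≤ Rtilde α s p₀ η μs μ₂ ∧
    Rtilde α s p₀ η μs μ₄ ≤ Rtilde α s p₀ η μs μ₃ := by
  have hμ₂ : 0 < μ₂ := hμ₁.trans h₁₂
  have hμs : 0 < μs := hμ₂.trans h₂s
  have hμ₃ : 0 < μ₃ := hμs.trans hs₃
  have hr₄ : bHat α s p₀ (min μ₄ μs) / aHat α p₀ μs μ₄ ≤ 1 / 2 := by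
    rw [min_eq_right (hs₃.trans h₃₄).le]
    exact hratio.le
  obtain ⟨ha₃, hr₃⟩ := aHat_pos_and_ratio_le_of_le hα.le hα1 hs0 hp hμs hμ₃ h₃₄.le hs₃.ne'
    (hs₃.trans h₃₄).ne' hpos hr₄
  obtain ⟨ha₂, hr₂⟩ := aHat_pos_and_ratio_le_of_le hα.le hα1 hs0 hp hμs hμ₂ (h₂s.trans hs₃).le
    h₂s.ne hs₃.ne' ha₃ hr₃
  exact ⟨Rtilde_le_Rtilde_of_le hα.le hα1 hs0 hp hμs hμ₁ h₁₂.le (h₁₂.trans h₂s).ne h₂s.ne ha₂ hr₂,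
    Rtilde_le_Rtilde_of_le hα.le hα1 hs0 hp hμs hμ₂ (h₂s.trans hs₃).le h₂s.ne hs₃.ne' ha₃ hr₃,
    Rtilde_le_Rtilde_of_le hα.le hα1 hs0 hp hμs hμ₃ h₃₄.le hs₃.ne' (hs₃.trans h₃₄).ne' hpos hr₄⟩

theorem stmt3 (α s p₀ η μs μ₁ μ₂ μ₃ μ₄ : ℝ)
    (hα : 0 < α) (hα1 : α ≤ 1) (hs0 : 0 ≤ s) (hs : s < 1 / 2) (hp : 0 < p₀) (hη : 0 ≤ η)
    (hμ₁ : 0 < μ₁) (h₁₂ : μ₁ < μ₂) (h₂s : μ₂ < μs) (hs₃ : μs < μ₃) (h₃₄ : μ₃ < μ₄)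
    (hpos : 0 < aHat α p₀ μs μ₄)
    (hratio : bHat α s p₀ μs / aHat α p₀ μs μ₄ < 1 / 2) :
    Rtilde α s p₀ η μs μ₂ ≤ Rtilde α s p₀ η μs μ₁ ∧
    Rtilde α s p₀ η μs μ₃ ≤ Rtilde α s p₀ η μs μ₂ ∧
    Rtilde α s p₀ η μs μ₄ ≤ Rtilde α s p₀ η μs μ₃ :=
  stmt3_general α s p₀ η μs μ₁ μ₂ μ₃ μ₄ hα hα1 hs0 hp hμ₁ h₁₂ h₂s hs₃ h₃₄ hpos hratio
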